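/- arXiv:1903.10034 — 7 statements merged into one kernel-verified Lean document; each statement's English description precedes it below -/
import Mathlib

section
/- Let 𝒞 be a category with finite limits, 𝓜 a class of morphisms, and 𝒮 a pullback-stable class of morphisms such that 𝓜 has the right cancellation property: if m∘m' ∈ 𝓜 and m' ∈ 𝒮 then m ∈ 𝓜. Then St(𝓜) has the same right cancellation property with respect to 𝒮: if m∘m' ∈ St(𝓜) and m' ∈ 𝒮 then m ∈ St(𝓜). -/
open CategoryTheory CategoryTheory.Limits

universe v u

variable {C : Type u} [Category.{v} C]

/-- The stabilization of a class of morphisms: `m` belongs to `Stab P` iff every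
pullback of `m` along any morphism belongs to `P`. -/
def Stab (P : MorphismProperty C) : MorphismProperty C :=
  fun _ A m => ∀ ⦃U X : C⦄ (p : U ⟶ _) (u : U ⟶ X) (x : X ⟶ A),
    IsPullback p u m x → P u

/-- If `P` has right cancellation with respect to a pullback-stable class `S`,
then so does `Stab P`. -/
theorem stab_right_cancel [HasFiniteLimits C] (P S : MorphismProperty C)
    (hSstable : ∀ ⦃U X M A : C⦄ (p : U ⟶ M) (u : U ⟶ X) (m : M ⟶ A) (x : X ⟶ A),
      IsPullback p u m x → S m → S u)
    (hcancel : ∀ ⦃X Y Z : C⦄ (m' : X ⟶ Y) (m : Y ⟶ Z), P (m' ≫ m) → S m' → P m)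
    {M' M A : C} (m' : M' ⟶ M) (m : M ⟶ A)
    (h : Stab P (m' ≫ m)) (hm' : S m') : Stab P m := by
  intro U X p u x hpb
  have hpb' : IsPullback (pullback.fst m' p) (pullback.snd m' p) m' p :=
    IsPullback.of_hasPullback m' p
  have hpaste : IsPullback (pullback.fst m' p) (pullback.snd m' p ≫ u) (m' ≫ m) x :=
    hpb'.paste_vert hpb
  have hPu : P (pullback.snd m' p ≫ u) := h _ _ _ hpaste
  have hSsnd : S (pullback.snd m' p) := hSstable _ _ _ _ hpb' hm'
  exact hcancel _ _ hPu hSsnd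
end

section
/- Let 𝒞 be a category with finite limits and 𝒮 a class of monomorphisms that is pullback stable, contains all isomorphisms, is closed under composition, and satisfies strong left cancellation (m∘m' ∈ 𝒮 ⇒ m' ∈ 𝒮). Then the class of 𝒮-essential monomorphisms is closed under composition. -/
open CategoryTheory CategoryTheory.Limits

universe v u

variable {C : Type u} [Category.{v} C]

/-- A morphism `m` in `S` is `S`-essential if whenever `m ≫ f ∈ S`, also `f ∈ S`. -/
def SEssential (S : MorphismProperty C) : MorphismProperty C :=
  fun _ A m => S m ∧ ∀ ⦃B : C⦄ (f : A ⟶ B), S (m ≫ f) → S f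

/-- The class of `S`-essential monomorphisms is closed under composition. -/
theorem sEssential_comp [HasFiniteLimits C] (S : MorphismProperty C)
    (hmono : ∀ ⦃X Y : C⦄ (f : X ⟶ Y), S f → Mono f)
    (hstable : ∀ ⦃U X M A : C⦄ (p : U ⟶ M) (u : U ⟶ X) (m : M ⟶ A) (x : X ⟶ A),
      IsPullback p u m x → S m → S u)
    (hiso : ∀ ⦃X Y : C⦄ (f : X ⟶ Y), IsIso f → S f)
    (hcomp : ∀ ⦃X Y Z : C⦄ (f : X ⟶ Y) (g : Y ⟶ Z), S f → S g → S (f ≫ g))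
    (hslc : ∀ ⦃X Y Z : C⦄ (f : X ⟶ Y) (g : Y ⟶ Z), S (f ≫ g) → S f)
    {M' M A : C} (m' : M' ⟶ M) (m : M ⟶ A)
    (hm' : SEssential S m') (hm : SEssential S m) : SEssential S (m' ≫ m) := by
  refine ⟨hcomp _ _ hm'.1 hm.1, fun B f hf => ?_⟩
  exact hm.2 f (hm'.2 (m ≫ f) (by simpa using hf))
end

section
/- Let 𝒞 be a normal category. A monomorphism m : M → A is essential if and only if for every normal monomorphism n : N → A (kernel of some morphism), the pullback M ×_A N = 0 implies N = 0. -/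
open CategoryTheory CategoryTheory.Limits

universe v u

variable (C : Type u) [Category.{v} C]

/-- A normal category: a pointed regular category (pullback-stable
(regular epi, mono) factorizations) in which every regular epimorphism is a
normal epimorphism. -/
class IsNormalCategory [HasFiniteLimits C] [HasZeroObject C]
    [HasZeroMorphisms C] : Prop where
  /-- every morphism factors as a regular epimorphism followed by a monomorphism -/
  fac : ∀ ⦃X Y : C⦄ (f : X ⟶ Y), ∃ (I : C) (e : X ⟶ I) (i : I ⟶ Y),
    Nonempty (RegularEpi e) ∧ Mono i ∧ e ≫ i = f
  /-- regular epimorphisms are stable under pullback -/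
  stable : ∀ ⦃U X M A : C⦄ (p : U ⟶ M) (u : U ⟶ X) (m : M ⟶ A) (x : X ⟶ A),
    IsPullback p u m x → Nonempty (RegularEpi m) → Nonempty (RegularEpi u)
  /-- every regular epimorphism is a normal epimorphism -/
  normalEpi : ∀ ⦃X Y : C⦄ (f : X ⟶ Y), Nonempty (RegularEpi f) →
    Nonempty (NormalEpi f)

variable {C}

/-- An essential monomorphism: a monomorphism `m` such that `f` is a
monomorphism whenever `m ≫ f` is. -/
def EssentialMono : MorphismProperty C :=
  fun _ A m => Mono m ∧ ∀ ⦃B : C⦄ (f : A ⟶ B), Mono (m ≫ f) → Mono f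

/-- A subobject-essential monomorphism: a monomorphism `m : M ⟶ A` such that
for every monomorphism `n : N ⟶ A`, if `M ×_A N = 0` then `N = 0`. -/
def SubobjEssential [HasFiniteLimits C] [HasZeroObject C] [HasZeroMorphisms C] :
    MorphismProperty C :=
  fun _ A m => Mono m ∧ ∀ ⦃N : C⦄ (n : N ⟶ A), Mono n →
    IsZero (pullback m n) → IsZero N

theorem mono_of_kernel_isZero' [HasFiniteLimits C] [HasZeroObject C]
    [HasZeroMorphisms C] [IsNormalCategory C] {X Y : C} (f : X ⟶ Y)
    (h : IsZero (kernel f)) : Mono f := by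
  obtain ⟨I, e, i, ⟨he⟩, hi, hef⟩ := IsNormalCategory.fac f
  obtain ⟨ne⟩ := IsNormalCategory.normalEpi e ⟨he⟩
  have hg : ne.g ≫ f = 0 := by rw [← hef, ← Category.assoc, ne.w, zero_comp]
  have hg0 : ne.g = 0 := by
    rw [← kernel.lift_ι f ne.g hg, h.eq_of_tgt (kernel.lift f ne.g hg) 0, zero_comp]
  have hd : e ≫ Cofork.IsColimit.desc ne.isColimit (𝟙 X) (by rw [hg0, zero_comp]) = 𝟙 X :=
    Cofork.IsColimit.π_desc ne.isColimit
  set d := Cofork.IsColimit.desc ne.isColimit (𝟙 X) (by rw [hg0, zero_comp]) with hdd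
  haveI := he; haveI : Epi e := inferInstance
  have hd2 : d ≫ e = 𝟙 I := by
    rw [← cancel_epi e, ← Category.assoc, hd, Category.id_comp, Category.comp_id]
  haveI : IsIso e := ⟨d, hd, hd2⟩
  rw [← hef]
  exact mono_comp e i

/-- In a normal category, a monomorphism `m : M ⟶ A` is essential iff for every
normal monomorphism `n : N ⟶ A`, `M ×_A N = 0` implies `N = 0`. -/
theorem essential_iff_normal_subobjects [HasFiniteLimits C] [HasZeroObject C]
    [HasZeroMorphisms C] [IsNormalCategory C]
    {M A : C} (m : M ⟶ A) (hm : Mono m) :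
    (∀ ⦃B : C⦄ (f : A ⟶ B), Mono (m ≫ f) → Mono f) ↔
      (∀ ⦃N : C⦄ (n : N ⟶ A), Nonempty (NormalMono n) →
        IsZero (pullback m n) → IsZero N) := by
  constructor
  · intro h N n ⟨nn⟩ hpz
    haveI : Mono n := by haveI := nn; infer_instance
    obtain ⟨l, hl⟩ := KernelFork.IsLimit.lift' nn.isLimit
      (kernel.ι (m ≫ nn.g) ≫ m) (by rw [Category.assoc, kernel.condition])
    have hι : kernel.ι (m ≫ nn.g) = 0 := by
      have := hpz.eq_of_tgt (pullback.lift (kernel.ι (m ≫ nn.g)) l (by simpa using hl.symm)) 0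
      calc kernel.ι (m ≫ nn.g)
          = pullback.lift (kernel.ι (m ≫ nn.g)) l (by simpa using hl.symm) ≫ pullback.fst m n := by
            exact (pullback.lift_fst _ _ _).symm
        _ = 0 := by rw [this, zero_comp]
    have hk : IsZero (kernel (m ≫ nn.g)) := by
      rw [IsZero.iff_id_eq_zero]
      exact (cancel_mono (kernel.ι (m ≫ nn.g))).1 (by simp [hι])
    haveI : Mono nn.g := h nn.g (mono_of_kernel_isZero' _ hk)
    have hn0 : n = 0 := (cancel_mono nn.g).1 (by rw [nn.w, zero_comp])
    rw [IsZero.iff_id_eq_zero]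
    exact (cancel_mono n).1 (by simp [hn0])
  · intro h B f hmf
    have hnm : Nonempty (NormalMono (kernel.ι f)) :=
      ⟨⟨B, f, kernel.condition f, kernelIsKernel f⟩⟩
    have hfst : pullback.fst m (kernel.ι f) = 0 := by
      rw [← cancel_mono (m ≫ f), zero_comp, ← Category.assoc, pullback.condition,
        Category.assoc, kernel.condition, comp_zero]
    have hsnd : pullback.snd m (kernel.ι f) = 0 := by
      rw [← cancel_mono (kernel.ι f), zero_comp, ← pullback.condition, hfst, zero_comp]
    have hpz : IsZero (pullback m (kernel.ι f)) := by
      rw [IsZero.iff_id_eq_zero]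
      apply pullback.hom_ext <;> simp [hfst, hsnd]
    exact mono_of_kernel_isZero' f (h (kernel.ι f) hnm hpz)
end

section
/- Let 𝒞 be a normal category. Every subobject-essential monomorphism in 𝒞 is an essential monomorphism. -/
open CategoryTheory CategoryTheory.Limits

universe v u

variable (C : Type u) [Category.{v} C]

variable {C}

/-- In a normal category, every subobject-essential monomorphism is essential. -/
theorem subobjEssential_essential [HasFiniteLimits C] [HasZeroObject C]
    [HasZeroMorphisms C] [IsNormalCategory C]
    {M A : C} (m : M ⟶ A) (h : SubobjEssential m) : EssentialMono m := by
  obtain ⟨hm, hess⟩ := h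
  refine ⟨hm, ?_⟩
  intro B f hf
  -- Step 1: the kernel of `f` is zero.
  have hfst : pullback.fst m (kernel.ι f) = 0 := by
    have : pullback.fst m (kernel.ι f) ≫ (m ≫ f) = 0 ≫ (m ≫ f) := by
      rw [zero_comp, ← Category.assoc, pullback.condition, Category.assoc,
        kernel.condition, comp_zero]
    exact (cancel_mono (m ≫ f)).mp this
  have hsnd : pullback.snd m (kernel.ι f) = 0 := by
    have hk : Mono (kernel.ι f) := inferInstance
    have : pullback.snd m (kernel.ι f) ≫ kernel.ι f = 0 ≫ kernel.ι f := by
      rw [zero_comp, ← pullback.condition, hfst, zero_comp]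
    exact (cancel_mono (kernel.ι f)).mp this
  have hPzero : IsZero (pullback m (kernel.ι f)) := by
    rw [IsZero.iff_id_eq_zero]
    apply pullback.hom_ext
    · rw [Category.id_comp, hfst, zero_comp]
    · rw [Category.id_comp, hsnd, zero_comp]
  have hK : IsZero (kernel f) := hess (kernel.ι f) inferInstance hPzero
  have hkι : kernel.ι f = 0 := hK.eq_of_src _ _
  -- Step 2: factor `f = e ≫ i`, show `e` is split mono, hence `f` mono.
  obtain ⟨I, e, i, hre, hi, hfac⟩ := IsNormalCategory.fac f
  obtain ⟨ne⟩ := IsNormalCategory.normalEpi e hre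
  have hg : ne.g = 0 := by
    have hgf : ne.g ≫ f = 0 := by
      rw [← hfac, ← Category.assoc, ne.w, zero_comp]
    have : kernel.lift f ne.g hgf ≫ kernel.ι f = ne.g := kernel.lift_ι f ne.g hgf
    rw [← this, hkι, comp_zero]
  obtain ⟨s, hs⟩ := CokernelCofork.IsColimit.desc' ne.isColimit (𝟙 A)
    (by rw [hg, zero_comp])
  have hs' : e ≫ s = 𝟙 A := hs
  have he : Mono e := ⟨fun a b hab => by
    have h2 : a ≫ e ≫ s = b ≫ e ≫ s := by
      rw [← Category.assoc, hab, Category.assoc]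
    rwa [hs', Category.comp_id, Category.comp_id] at h2⟩
  rw [← hfac]
  exact mono_comp e i
end

section
/- Let 𝒞 be a pointed category with finite limits and A an object such that every monomorphism with codomain A is a normal monomorphism, where 𝒞 is normal. Then a monomorphism m : M → A is subobject-essential if and only if it is essential. -/
open CategoryTheory CategoryTheory.Limits

universe v u

variable (C : Type u) [Category.{v} C]

variable {C}

/-- In a normal category, a morphism with zero kernel is a monomorphism. -/
lemma mono_of_isZero_kernel [HasFiniteLimits C] [HasZeroObject C]
    [HasZeroMorphisms C] [IsNormalCategory C] {X Y : C} (f : X ⟶ Y)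
    (hker : IsZero (kernel f)) : Mono f := by
  obtain ⟨I, e, i, ⟨re⟩, hi, rfl⟩ := IsNormalCategory.fac f
  obtain ⟨ne⟩ := IsNormalCategory.normalEpi e ⟨re⟩
  have hg : ne.g = 0 := by
    have hw : ne.g ≫ (e ≫ i) = 0 := by rw [← Category.assoc, ne.w, zero_comp]
    have h1 : kernel.lift (e ≫ i) ne.g hw ≫ kernel.ι (e ≫ i) = ne.g :=
      kernel.lift_ι _ _ _
    rw [← h1, hker.eq_of_tgt (kernel.lift (e ≫ i) ne.g hw) 0, zero_comp]
  haveI : IsIso e := by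
    have := CokernelCofork.IsColimit.isIso_π _ ne.isColimit hg
    simpa using this
  haveI := hi
  exact mono_comp e i

/-- In a normal category, if every monomorphism with codomain `A` is a normal
monomorphism, then a monomorphism `m : M ⟶ A` is subobject-essential iff it is
essential. -/
theorem subobjEssential_iff_essential [HasFiniteLimits C] [HasZeroObject C]
    [HasZeroMorphisms C] [IsNormalCategory C]
    {A : C} (hA : ∀ ⦃N : C⦄ (n : N ⟶ A), Mono n → Nonempty (NormalMono n))
    {M : C} (m : M ⟶ A) (hm : Mono m) :
    SubobjEssential m ↔ EssentialMono m := by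
  constructor
  · rintro ⟨-, hsub⟩
    refine ⟨hm, fun B f hmf => ?_⟩
    -- the pullback of `m` and `ker f` is zero
    have hP : IsZero (pullback m (kernel.ι f)) := by
      have h0 : pullback.fst m (kernel.ι f) = 0 := by
        rw [← cancel_mono (m ≫ f)]
        rw [← Category.assoc, pullback.condition, Category.assoc, kernel.condition,
          comp_zero, zero_comp]
      exact IsZero.of_mono_eq_zero _ h0
    have hK : IsZero (kernel f) := hsub (kernel.ι f) inferInstance hP
    exact mono_of_isZero_kernel f hK
  · rintro ⟨-, hess⟩
    refine ⟨hm, fun N n hn hP => ?_⟩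
    obtain ⟨nm⟩ := hA n hn
    -- `m ≫ nm.g` has zero kernel, hence is mono
    have hmg : Mono (m ≫ nm.g) := by
      apply mono_of_isZero_kernel
      have hw : (kernel.ι (m ≫ nm.g) ≫ m) ≫ nm.g = 0 := by
        rw [Category.assoc, kernel.condition]
      obtain ⟨t, ht⟩ := KernelFork.IsLimit.lift' nm.isLimit
        (kernel.ι (m ≫ nm.g) ≫ m) hw
      have hcomm : kernel.ι (m ≫ nm.g) ≫ m = t ≫ n := ht.symm
      have h0 : kernel.ι (m ≫ nm.g) = 0 := by
        have h1 : pullback.lift (kernel.ι (m ≫ nm.g)) t hcomm ≫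
            pullback.fst m n = kernel.ι (m ≫ nm.g) := pullback.lift_fst _ _ _
        rw [← h1, hP.eq_of_tgt (pullback.lift (kernel.ι (m ≫ nm.g)) t hcomm) 0,
          zero_comp]
      exact IsZero.of_mono_eq_zero _ h0
    have hg : Mono nm.g := hess nm.g hmg
    have hn0 : n = 0 := by
      rw [← cancel_mono nm.g, nm.w, zero_comp]
    exact IsZero.of_mono_eq_zero n hn0
end

section
/- Let 𝒞 be a normal category. The class of subobject-essential monomorphisms is pullback stable: if m : M → A is subobject-essential and x : X → A is any morphism, then the pullback projection M ×_A X → X is a subobject-essential monomorphism. -/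
open CategoryTheory CategoryTheory.Limits

universe v u

variable (C : Type u) [Category.{v} C]

variable {C}

/-- In a normal category, subobject-essential monomorphisms are pullback
stable: the pullback of a subobject-essential monomorphism `m : M ⟶ A` along
any morphism `x : X ⟶ A` is a subobject-essential monomorphism. -/
theorem subobjEssential_pullback_stable [HasFiniteLimits C] [HasZeroObject C]
    [HasZeroMorphisms C] [IsNormalCategory C]
    {M A X : C} (m : M ⟶ A) (hm : SubobjEssential m) (x : X ⟶ A) :
    SubobjEssential (pullback.snd m x) := by
  obtain ⟨hmono, hess⟩ := hm
  refine ⟨inferInstance, ?_⟩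
  intro N n hn hZ
  -- big pasted pullback square
  have big : IsPullback (pullback.fst (pullback.snd m x) n ≫ pullback.fst m x)
      (pullback.snd (pullback.snd m x) n) m (n ≫ x) :=
    (IsPullback.of_hasPullback (pullback.snd m x) n).paste_horiz
      (IsPullback.of_hasPullback m x)
  -- factor n ≫ x
  obtain ⟨I, e, i, ⟨he⟩, hi, hfac⟩ := IsNormalCategory.fac (n ≫ x)
  have big' : IsPullback (pullback.fst (pullback.snd m x) n ≫ pullback.fst m x)
      (pullback.snd (pullback.snd m x) n) m (e ≫ i) := by rwa [hfac]
  have tQ : IsPullback (pullback.fst m i) (pullback.snd m i) m i :=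
    IsPullback.of_hasPullback m i
  have left := IsPullback.of_right' big' tQ
  -- the left square, flipped, exhibits a map Z → pullback m i as a pullback of e
  obtain ⟨hre⟩ := IsNormalCategory.stable _ _ _ _ left.flip ⟨he⟩
  -- epi out of a zero object forces the target to be zero
  have pf : (pullback.fst (pullback.snd m x) n ≫ pullback.fst m x) ≫ m =
      (pullback.snd (pullback.snd m x) n ≫ e) ≫ i := by
    simp only [Category.assoc, hfac]; simpa using big.w
  have hQ : IsZero (pullback m i) := by
    haveI := hre
    haveI he' : Epi (tQ.lift (pullback.fst (pullback.snd m x) n ≫ pullback.fst m x)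
        (pullback.snd (pullback.snd m x) n ≫ e) pf) := hre.epi
    rw [IsZero.iff_id_eq_zero,
      ← cancel_epi (tQ.lift (pullback.fst (pullback.snd m x) n ≫ pullback.fst m x)
        (pullback.snd (pullback.snd m x) n ≫ e) pf)]
    exact hZ.eq_of_src _ _
  have hI : IsZero I := hess i hi hQ
  have hnx : n ≫ x = 0 := by
    rw [← hfac, hI.eq_of_src i 0, comp_zero]
  -- lift the identity of N through the (zero) pullback
  have hb : (0 : N ⟶ M) ≫ m = n ≫ x := by rw [hnx, zero_comp]
  let b : N ⟶ pullback m x := pullback.lift 0 n hb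
  have hbsnd : b ≫ pullback.snd m x = n := pullback.lift_snd _ _ _
  have hl : b ≫ pullback.snd m x = 𝟙 N ≫ n := by rw [hbsnd, Category.id_comp]
  let l : N ⟶ pullback (pullback.snd m x) n := pullback.lift b (𝟙 N) hl
  rw [IsZero.iff_id_eq_zero]
  calc 𝟙 N = l ≫ pullback.snd (pullback.snd m x) n := (pullback.lift_snd _ _ _).symm
    _ = l ≫ 0 := by rw [hZ.eq_of_src (pullback.snd (pullback.snd m x) n) 0]
    _ = 0 := comp_zero
end

section
/- Let 𝒞 be a pointed category, 𝓜 a class of morphisms with the property that every x ∈ 𝓜 has zero kernel, and let A, B be 𝓜-uniform objects (every morphism x : X → A with X ≠ 0 and Ker(x) = 0 belongs to 𝓜, and similarly for B). Then every non-zero morphism A → B in the category of fractions 𝒞[𝓜⁻¹] of the form P(f)∘P(x)⁻¹ with x ∈ 𝓜 is an isomorphism. -/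
open CategoryTheory CategoryTheory.Limits

universe v u

variable {C : Type u} [Category.{v} C]

/-- An object `A` is `W`-uniform if every morphism `x : X ⟶ A` with `X ≠ 0` and
`Ker x = 0` belongs to `W`. -/
def IsUniform [HasZeroObject C] [HasZeroMorphisms C] [HasKernels C]
    (W : MorphismProperty C) (A : C) : Prop :=
  ∀ ⦃X : C⦄ (x : X ⟶ A), ¬ IsZero X → IsZero (kernel x) → W x

/-- If `A` and `B` are `W`-uniform objects, where every member of `W` has zero
kernel, then every non-zero morphism `A ⟶ B` of the form `P(f) ∘ P(x)⁻¹` in the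
category of fractions `C[W⁻¹]`, with `x ∈ W`, is an isomorphism. -/
theorem uniform_hom_isIso [HasZeroObject C] [HasZeroMorphisms C] [HasKernels C]
    (W : MorphismProperty C)
    (hker : ∀ ⦃X Y : C⦄ (f : X ⟶ Y), W f → IsZero (kernel f))
    {A B : C} (hA : IsUniform W A) (hB : IsUniform W B)
    {X : C} (x : X ⟶ A) (hx : W x) (f : X ⟶ B)
    (hne : (Localization.isoOfHom W.Q W x hx).inv ≫ W.Q.map f ≠
      W.Q.map (0 : A ⟶ B)) :
    IsIso ((Localization.isoOfHom W.Q W x hx).inv ≫ W.Q.map f) := by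
  have hQx : (Localization.isoOfHom W.Q W x hx).hom = W.Q.map x := rfl
  -- X is not zero
  have hX : ¬ IsZero X := by
    intro h
    apply hne
    have hf : f = x ≫ (0 : A ⟶ B) := h.eq_of_src _ _
    rw [hf, Functor.map_comp, ← hQx, Iso.inv_hom_id_assoc]
  -- kernel f is zero
  have hKf : IsZero (kernel f) := by
    by_contra hK
    -- kernel of (kernel.ι f ≫ x) is zero
    have hkx : IsZero (kernel (kernel.ι f ≫ x)) := by
      apply IsZero.of_mono_eq_zero (kernel.ι (kernel.ι f ≫ x))
      rw [← cancel_mono (kernel.ι f)]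
      have hl : kernel.lift x (kernel.ι (kernel.ι f ≫ x) ≫ kernel.ι f)
          (by rw [Category.assoc, kernel.condition]) = 0 :=
        (hker x hx).eq_of_tgt _ _
      have := kernel.lift_ι x (kernel.ι (kernel.ι f ≫ x) ≫ kernel.ι f)
          (by rw [Category.assoc, kernel.condition])
      rw [hl] at this
      rw [← this, zero_comp, zero_comp]
    have hW : W (kernel.ι f ≫ x) := hA _ hK hkx
    have hiso : IsIso (W.Q.map (kernel.ι f ≫ x)) := Localization.inverts W.Q W _ hW
    have hisox : IsIso (W.Q.map x) := Localization.inverts W.Q W _ hx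
    rw [Functor.map_comp] at hiso
    have hisoι : IsIso (W.Q.map (kernel.ι f)) :=
      IsIso.of_isIso_comp_right _ (W.Q.map x)
    apply hne
    have h1 : W.Q.map (kernel.ι f) ≫ W.Q.map f =
        W.Q.map (kernel.ι f) ≫ W.Q.map x ≫ W.Q.map (0 : A ⟶ B) := by
      rw [← Functor.map_comp, ← Functor.map_comp, ← Functor.map_comp,
        kernel.condition]
      congr 1
      simp
    rw [cancel_epi (W.Q.map (kernel.ι f))] at h1
    rw [h1, ← hQx, Iso.inv_hom_id_assoc]
  have hWf : W f := hB f hX hKf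
  have : IsIso (W.Q.map f) := Localization.inverts W.Q W _ hWf
  infer_instance
end
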